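/- arXiv:math/9903135 — 3 statements merged into one kernel-verified Lean document; each statement's English description precedes it below -/
import Mathlib

section
/- The second quandle cohomology group of the dihedral quandle R_3 with integer coefficients is trivial: H²_Q(R_3; Z) ≅ 0. -/
/-- The dihedral quandle `R₃` operation on `ZMod 3`: `i * j = 2j − i`. -/
def r3op (i j : ZMod 3) : ZMod 3 := 2 * j - i

/-- `H²_Q(R₃; ℤ) ≅ 0`: every quandle 2-cocycle of the dihedral quandle `R₃`
with integer coefficients is a coboundary `(δg)(x,y) = g(x) − g(x*y)`. -/
theorem H2_R3_trivial (f : ZMod 3 → ZMod 3 → ℤ)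
    (hdiag : ∀ p, f p p = 0)
    (hcoc : ∀ p q r,
      f p r + f (r3op p r) (r3op q r) = f p q + f (r3op p q) r) :
    ∃ g : ZMod 3 → ℤ, ∀ x y, f x y = g x - g (r3op x y) := by
  have e00 : r3op 0 0 = 0 := by decide
  have e01 : r3op 0 1 = 2 := by decide
  have e02 : r3op 0 2 = 1 := by decide
  have e10 : r3op 1 0 = 2 := by decide
  have e11 : r3op 1 1 = 1 := by decide
  have e12 : r3op 1 2 = 0 := by decide
  have e20 : r3op 2 0 = 1 := by decide
  have e21 : r3op 2 1 = 0 := by decide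
  have e22 : r3op 2 2 = 2 := by decide
  have h1 := hcoc 0 1 2
  have h2 := hcoc 0 2 1
  have h3 := hcoc 1 0 2
  have h4 := hcoc 1 2 0
  have h5 := hcoc 2 0 1
  have h6 := hcoc 2 1 0
  have h7 := hcoc 0 1 0
  have h8 := hcoc 0 2 0
  have h9 := hcoc 1 0 1
  have h10 := hcoc 1 2 1
  have h11 := hcoc 2 0 2
  have h12 := hcoc 2 1 2
  simp only [e00, e01, e02, e10, e11, e12, e20, e21, e22,
    hdiag 0, hdiag 1, hdiag 2] at h1 h2 h3 h4 h5 h6 h7 h8 h9 h10 h11 h12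
  refine ⟨fun x => if x = 0 then 0 else if x = 1 then f 2 1 - f 2 0 else f 2 1, ?_⟩
  have d0 := hdiag 0
  have d1 := hdiag 1
  have d2 := hdiag 2
  have hx : ∀ x : ZMod 3, x = 0 ∨ x = 1 ∨ x = 2 := by decide
  have c10 : ((1 : ZMod 3) = 0) = False := eq_false (by decide)
  have c20 : ((2 : ZMod 3) = 0) = False := eq_false (by decide)
  have c21 : ((2 : ZMod 3) = 1) = False := eq_false (by decide)
  intro x y
  rcases hx x with rfl | rfl | rfl <;> rcases hx y with rfl | rfl | rfl <;>
    simp only [e00, e01, e02, e10, e11, e12, e20, e21, e22, c10, c20, c21,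
      eq_self_iff_true, if_true, if_false] <;> linarith
end

section
/- The third quandle cohomology group of R_3 with Z_3 coefficients is H³_Q(R_3; Z_3) ≅ Z_3, while with integer coefficients H³_Q(R_3; Z) ≅ 0. Moreover the function θ = −χ_{(0,1,0)} + χ_{(0,2,0)} − χ_{(0,2,1)} + χ_{(1,0,1)} + χ_{(1,0,2)} + χ_{(2,0,2)} + χ_{(2,1,2)} is a quandle 3-cocycle of R_3 with Z_3 coefficients representing a generator. -/
/-- Characteristic function `χ_{(a,b,c)}` on `R₃³` with values in a ring. -/
def chi3 {A : Type*} [Ring A] (a b c p q r : ZMod 3) : A :=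
  if p = a ∧ q = b ∧ r = c then 1 else 0

/-- The 3-cochain
`θ = −χ_{(0,1,0)} + χ_{(0,2,0)} − χ_{(0,2,1)} + χ_{(1,0,1)} + χ_{(1,0,2)}
  + χ_{(2,0,2)} + χ_{(2,1,2)}`. -/
def thetaGen {A : Type*} [Ring A] (p q r : ZMod 3) : A :=
  -chi3 0 1 0 p q r + chi3 0 2 0 p q r - chi3 0 2 1 p q r +
    chi3 1 0 1 p q r + chi3 1 0 2 p q r + chi3 2 0 2 p q r +
    chi3 2 1 2 p q r

/-- `θ` is a quandle 3-cocycle of `R₃`: it vanishes on degenerate triples and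
satisfies the 3-cocycle relation. -/
def IsQ3Cocycle {A : Type*} [AddCommGroup A]
    (θ : ZMod 3 → ZMod 3 → ZMod 3 → A) : Prop :=
  (∀ x y, θ x x y = 0 ∧ θ x y y = 0) ∧
  ∀ p q r s,
    θ p q r + θ (r3op p r) (r3op q r) s + θ p r s =
      θ (r3op p q) r s + θ p q s + θ (r3op p s) (r3op q s) (r3op r s)

/-- `θ` is the coboundary `δφ` of a quandle 2-cochain `φ`, with
`(δφ)(p,q,r) = φ(p,r) − φ(p*q,r) − φ(p,q) + φ(p*r,q*r)`
(dual to the rack boundary `∂₃`). -/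
def IsQ3Coboundary {A : Type*} [AddCommGroup A]
    (θ : ZMod 3 → ZMod 3 → ZMod 3 → A) : Prop :=
  ∃ φ : ZMod 3 → ZMod 3 → A, (∀ p, φ p p = 0) ∧
    ∀ p q r, θ p q r =
      φ p r - φ (r3op p q) r - φ p q + φ (r3op p r) (r3op q r)

/-- `H³_Q(R₃; ℤ₃) ≅ ℤ₃` with the class of
`θ = −χ_{(0,1,0)} + χ_{(0,2,0)} − χ_{(0,2,1)} + χ_{(1,0,1)} + χ_{(1,0,2)}
 + χ_{(2,0,2)} + χ_{(2,1,2)}` as a generator, while `H³_Q(R₃; ℤ) ≅ 0`: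
`θ` is a ℤ₃-valued 3-cocycle that is not a coboundary, every ℤ₃-valued
3-cocycle is cohomologous to a multiple of `θ`, and every integral 3-cocycle
is a coboundary. -/
theorem H3_R3 :
    IsQ3Cocycle (thetaGen (A := ZMod 3)) ∧
    ¬ IsQ3Coboundary (thetaGen (A := ZMod 3)) ∧
    (∀ η : ZMod 3 → ZMod 3 → ZMod 3 → ZMod 3, IsQ3Cocycle η →
      ∃ c : ZMod 3, ∃ φ : ZMod 3 → ZMod 3 → ZMod 3,
        (∀ p, φ p p = 0) ∧
        ∀ p q r, η p q r = c * thetaGen p q r +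
          (φ p r - φ (r3op p q) r - φ p q + φ (r3op p r) (r3op q r))) ∧
    (∀ η : ZMod 3 → ZMod 3 → ZMod 3 → ℤ, IsQ3Cocycle η →
      IsQ3Coboundary η) := by
  refine ⟨?_, ?_, ?_, ?_⟩
  · unfold IsQ3Cocycle
    decide
  ·
    rintro ⟨φ, hdphi, h⟩
    have h3 : (3 : ZMod 3) = 0 := by decide
    have e012 : (0 : ZMod 3) = φ 0 2 - φ 2 2 - φ 0 1 + φ 1 0 := h 0 1 2
    have e020 : (1 : ZMod 3) = φ 0 0 - φ 1 0 - φ 0 2 + φ 0 1 := h 0 2 0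
    have hW : (1 : ZMod 3) = 0 := by linear_combination e012 + e020 + (1) * hdphi 0 + (-1) * hdphi 2
    exact absurd hW (by decide)
  ·
    intro η hη
    obtain ⟨hdeg, hcoc⟩ := hη
    have hD1 : ∀ x y : ZMod 3, η x x y = 0 := fun x y => (hdeg x y).1
    have hD2 : ∀ x y : ZMod 3, η x y y = 0 := fun x y => (hdeg x y).2
    have h3 : (3 : ZMod 3) = 0 := by decide
    have hc0101 : η 0 1 0 + η 0 2 1 + η 0 0 1 = η 2 0 1 + η 0 1 1 + η 2 1 2 := hcoc 0 1 0 1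
    have hc0102 : η 0 1 0 + η 0 2 2 + η 0 0 2 = η 2 0 2 + η 0 1 2 + η 1 0 1 := hcoc 0 1 0 2
    have hc0120 : η 0 1 2 + η 1 0 0 + η 0 2 0 = η 2 2 0 + η 0 1 0 + η 0 2 1 := hcoc 0 1 2 0
    have hc0121 : η 0 1 2 + η 1 0 1 + η 0 2 1 = η 2 2 1 + η 0 1 1 + η 2 1 0 := hcoc 0 1 2 1
    have hc0202 : η 0 2 0 + η 0 1 2 + η 0 0 2 = η 1 0 2 + η 0 2 2 + η 1 2 1 := hcoc 0 2 0 2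
    have hc0212 : η 0 2 1 + η 2 0 2 + η 0 1 2 = η 1 1 2 + η 0 2 2 + η 1 2 0 := hcoc 0 2 1 2
    have hc1012 : η 1 0 1 + η 1 2 2 + η 1 1 2 = η 2 1 2 + η 1 0 2 + η 0 1 0 := hcoc 1 0 1 2
    refine ⟨η 2 0 2 + η 2 1 0, fun a b => if a = 0 then (if b = 1 then (η 1 2 0 + 2 * η 1 2 1) else if b = 2 then (η 2 0 2 + η 2 1 0 + 2 * η 2 1 2) else 0) else if a = 1 then (if b = 0 then (η 1 2 0 + η 2 1 0) else if b = 2 then (η 2 1 0) else 0) else (if b = 0 then (0) else if b = 1 then (0) else 0), ?_, ?_⟩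
    · intro p; fin_cases p <;> rfl
    · intro p q r
      fin_cases p <;> fin_cases q <;> fin_cases r
      · show η 0 0 0 = (η 2 0 2 + η 2 1 0) * 0 + ((0) - (0) - (0) + (0))
        linear_combination (hD1 0 0)
      · show η 0 0 1 = (η 2 0 2 + η 2 1 0) * 0 + ((η 1 2 0 + 2 * η 1 2 1) - (η 1 2 0 + 2 * η 1 2 1) - (0) + (0))
        linear_combination (hD1 0 1)
      · show η 0 0 2 = (η 2 0 2 + η 2 1 0) * 0 + ((η 2 0 2 + η 2 1 0 + 2 * η 2 1 2) - (η 2 0 2 + η 2 1 0 + 2 * η 2 1 2) - (0) + (0))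
        linear_combination (hD1 0 2)
      · show η 0 1 0 = (η 2 0 2 + η 2 1 0) * 2 + ((0) - (0) - (η 1 2 0 + 2 * η 1 2 1) + (η 2 0 2 + η 2 1 0 + 2 * η 2 1 2))
        linear_combination (hD2 0 2) + (hD2 1 0) + (hD2 1 2) + (2) * (hD1 2 0) + (2) * hc0102 + (2) * hc0120 + hc0202 + (2) * hc0212 + (2) * hc1012 + (-η 0 0 2 + η 0 1 0 - η 0 1 2 - η 0 2 0 - η 1 0 0 + η 1 0 2 + η 1 2 0 + η 1 2 1 - η 1 2 2 - η 2 0 2 - η 2 1 0) * h3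
      · show η 0 1 1 = (η 2 0 2 + η 2 1 0) * 0 + ((η 1 2 0 + 2 * η 1 2 1) - (0) - (η 1 2 0 + 2 * η 1 2 1) + (0))
        linear_combination (hD2 0 1)
      · show η 0 1 2 = (η 2 0 2 + η 2 1 0) * 0 + ((η 2 0 2 + η 2 1 0 + 2 * η 2 1 2) - (0) - (η 1 2 0 + 2 * η 1 2 1) + (η 1 2 0 + η 2 1 0))
        linear_combination (2) * (hD2 0 1) + (hD1 0 2) + (hD2 1 0) + (hD1 1 2) + (hD2 1 2) + (2) * (hD1 2 0) + (2) * (hD1 2 1) + hc0102 + (2) * hc0120 + (2) * hc0121 + hc0202 + (2) * hc1012 + (-η 0 0 2 + η 0 1 0 - η 0 1 2 - η 0 2 0 - η 1 0 0 - η 1 0 1 + η 1 0 2 - η 1 1 2 + η 1 2 1 - η 1 2 2) * h3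
      · show η 0 2 0 = (η 2 0 2 + η 2 1 0) * 1 + ((0) - (η 1 2 0 + η 2 1 0) - (η 2 0 2 + η 2 1 0 + 2 * η 2 1 2) + (η 1 2 0 + 2 * η 1 2 1))
        linear_combination (2) * (hD2 0 1) + (hD1 0 2) + (2) * (hD2 0 2) + (hD2 1 0) + (2) * (hD1 1 2) + (2) * (hD2 1 2) + (2) * (hD1 2 0) + (2) * (hD1 2 1) + (2) * hc0120 + (2) * hc0121 + (2) * hc0202 + hc1012 + (-η 0 0 2 + η 0 1 0 - 2 * η 0 1 2 - η 0 2 0 - η 1 0 0 - η 1 0 1 + η 1 0 2 - η 1 1 2 - η 1 2 2 + η 2 1 0 + η 2 1 2) * h3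
      · show η 0 2 1 = (η 2 0 2 + η 2 1 0) * 2 + ((η 1 2 0 + 2 * η 1 2 1) - (0) - (η 2 0 2 + η 2 1 0 + 2 * η 2 1 2) + (0))
        linear_combination (hD2 0 1) + (2) * (hD1 0 2) + (hD2 0 2) + (2) * (hD2 1 0) + (2) * (hD2 1 2) + (hD1 2 0) + (hD1 2 1) + (2) * hc0102 + hc0120 + hc0121 + (2) * hc0202 + hc0212 + hc1012 + (-2 * η 0 0 2 - η 0 1 2 - η 0 2 0 - η 1 0 0 + η 1 0 2 - η 1 2 2 + η 2 1 2) * h3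
      · show η 0 2 2 = (η 2 0 2 + η 2 1 0) * 0 + ((η 2 0 2 + η 2 1 0 + 2 * η 2 1 2) - (η 2 1 0) - (η 2 0 2 + η 2 1 0 + 2 * η 2 1 2) + (η 2 1 0))
        linear_combination (hD2 0 2)
      · show η 1 0 0 = (η 2 0 2 + η 2 1 0) * 0 + ((η 1 2 0 + η 2 1 0) - (0) - (η 1 2 0 + η 2 1 0) + (0))
        linear_combination (hD2 1 0)
      · show η 1 0 1 = (η 2 0 2 + η 2 1 0) * 1 + ((0) - (0) - (η 1 2 0 + η 2 1 0) + (η 2 1 0))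
        linear_combination (hD2 0 1) + (2) * (hD2 0 2) + (2) * (hD1 1 2) + (hD1 2 1) + hc0121 + (2) * hc0212 + (-η 0 1 2 - η 0 2 1 + η 1 2 0 - η 2 0 2) * h3
      · show η 1 0 2 = (η 2 0 2 + η 2 1 0) * 1 + ((η 2 1 0) - (0) - (η 1 2 0 + η 2 1 0) + (η 1 2 0 + 2 * η 1 2 1))
        linear_combination (hD2 0 1) + (hD2 0 2) + (2) * (hD2 1 0) + (hD1 2 0) + (hD1 2 1) + hc0102 + hc0120 + hc0121 + (2) * hc0202 + (-η 0 0 2 - η 0 1 2 - η 0 2 0 - η 1 0 0 + η 1 0 2) * h3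
      · show η 1 1 0 = (η 2 0 2 + η 2 1 0) * 0 + ((η 1 2 0 + η 2 1 0) - (η 1 2 0 + η 2 1 0) - (0) + (0))
        linear_combination (hD1 1 0)
      · show η 1 1 1 = (η 2 0 2 + η 2 1 0) * 0 + ((0) - (0) - (0) + (0))
        linear_combination (hD1 1 1)
      · show η 1 1 2 = (η 2 0 2 + η 2 1 0) * 0 + ((η 2 1 0) - (η 2 1 0) - (0) + (0))
        linear_combination (hD1 1 2)
      · show η 1 2 0 = (η 2 0 2 + η 2 1 0) * 0 + ((η 1 2 0 + η 2 1 0) - (0) - (η 2 1 0) + (0))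
        linear_combination (0 : ZMod 3) * h3
      · show η 1 2 1 = (η 2 0 2 + η 2 1 0) * 0 + ((0) - (η 1 2 0 + 2 * η 1 2 1) - (η 2 1 0) + (η 1 2 0 + η 2 1 0))
        linear_combination (η 1 2 1) * h3
      · show η 1 2 2 = (η 2 0 2 + η 2 1 0) * 0 + ((η 2 1 0) - (η 2 0 2 + η 2 1 0 + 2 * η 2 1 2) - (η 2 1 0) + (η 2 0 2 + η 2 1 0 + 2 * η 2 1 2))
        linear_combination (hD2 1 2)
      · show η 2 0 0 = (η 2 0 2 + η 2 1 0) * 0 + ((0) - (η 1 2 0 + η 2 1 0) - (0) + (η 1 2 0 + η 2 1 0))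
        linear_combination (hD2 2 0)
      · show η 2 0 1 = (η 2 0 2 + η 2 1 0) * 0 + ((0) - (0) - (0) + (η 2 0 2 + η 2 1 0 + 2 * η 2 1 2))
        linear_combination (hD1 0 1) + (2) * (hD1 0 2) + (2) * (hD2 0 2) + (hD1 2 1) + (2) * hc0101 + hc0102 + hc0121 + (-η 0 0 1 - η 0 0 2 - η 0 1 0 + η 0 1 1 - η 0 2 1 - η 0 2 2 + η 2 0 1) * h3
      · show η 2 0 2 = (η 2 0 2 + η 2 1 0) * 1 + ((0) - (η 2 1 0) - (0) + (0))
        linear_combination (0 : ZMod 3) * h3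
      · show η 2 1 0 = (η 2 0 2 + η 2 1 0) * 0 + ((0) - (0) - (0) + (η 2 1 0))
        linear_combination (0 : ZMod 3) * h3
      · show η 2 1 1 = (η 2 0 2 + η 2 1 0) * 0 + ((0) - (η 1 2 0 + 2 * η 1 2 1) - (0) + (η 1 2 0 + 2 * η 1 2 1))
        linear_combination (hD2 2 1)
      · show η 2 1 2 = (η 2 0 2 + η 2 1 0) * 1 + ((0) - (η 2 0 2 + η 2 1 0 + 2 * η 2 1 2) - (0) + (0))
        linear_combination (η 2 1 2) * h3
      · show η 2 2 0 = (η 2 0 2 + η 2 1 0) * 0 + ((0) - (0) - (0) + (0))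
        linear_combination (hD1 2 0)
      · show η 2 2 1 = (η 2 0 2 + η 2 1 0) * 0 + ((0) - (0) - (0) + (0))
        linear_combination (hD1 2 1)
      · show η 2 2 2 = (η 2 0 2 + η 2 1 0) * 0 + ((0) - (0) - (0) + (0))
        linear_combination (hD1 2 2)
  ·
    intro η hη
    obtain ⟨hdeg, hcoc⟩ := hη
    have hD1 : ∀ x y : ZMod 3, η x x y = 0 := fun x y => (hdeg x y).1
    have hD2 : ∀ x y : ZMod 3, η x y y = 0 := fun x y => (hdeg x y).2
    have hc0001 : η 0 0 0 + η 0 0 1 + η 0 0 1 = η 0 0 1 + η 0 0 1 + η 2 2 2 := hcoc 0 0 0 1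
    have hc0002 : η 0 0 0 + η 0 0 2 + η 0 0 2 = η 0 0 2 + η 0 0 2 + η 1 1 1 := hcoc 0 0 0 2
    have hc0010 : η 0 0 1 + η 2 2 0 + η 0 1 0 = η 0 1 0 + η 0 0 0 + η 0 0 2 := hcoc 0 0 1 0
    have hc0012 : η 0 0 1 + η 2 2 2 + η 0 1 2 = η 0 1 2 + η 0 0 2 + η 1 1 0 := hcoc 0 0 1 2
    have hc0101 : η 0 1 0 + η 0 2 1 + η 0 0 1 = η 2 0 1 + η 0 1 1 + η 2 1 2 := hcoc 0 1 0 1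
    have hc0102 : η 0 1 0 + η 0 2 2 + η 0 0 2 = η 2 0 2 + η 0 1 2 + η 1 0 1 := hcoc 0 1 0 2
    have hc0111 : η 0 1 1 + η 2 1 1 + η 0 1 1 = η 2 1 1 + η 0 1 1 + η 2 1 1 := hcoc 0 1 1 1
    have hc0112 : η 0 1 1 + η 2 1 2 + η 0 1 2 = η 2 1 2 + η 0 1 2 + η 1 0 0 := hcoc 0 1 1 2
    have hc0120 : η 0 1 2 + η 1 0 0 + η 0 2 0 = η 2 2 0 + η 0 1 0 + η 0 2 1 := hcoc 0 1 2 0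
    have hc0121 : η 0 1 2 + η 1 0 1 + η 0 2 1 = η 2 2 1 + η 0 1 1 + η 2 1 0 := hcoc 0 1 2 1
    have hc0202 : η 0 2 0 + η 0 1 2 + η 0 0 2 = η 1 0 2 + η 0 2 2 + η 1 2 1 := hcoc 0 2 0 2
    have hc0212 : η 0 2 1 + η 2 0 2 + η 0 1 2 = η 1 1 2 + η 0 2 2 + η 1 2 0 := hcoc 0 2 1 2
    have hc1012 : η 1 0 1 + η 1 2 2 + η 1 1 2 = η 2 1 2 + η 1 0 2 + η 0 1 0 := hcoc 1 0 1 2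
    have hc2010 : η 2 0 1 + η 0 2 0 + η 2 1 0 = η 1 1 0 + η 2 0 0 + η 1 0 2 := hcoc 2 0 1 0
    refine ⟨fun a b => if a = 0 then (if b = 1 then (-η 0 1 0 - η 2 1 2) else if b = 2 then (-η 2 1 2) else 0) else if a = 1 then (if b = 0 then (-η 0 1 0 + η 0 1 2) else if b = 2 then (-η 0 1 0 + η 0 1 2 + η 1 0 1) else 0) else (if b = 0 then (0) else if b = 1 then (0) else 0), ?_, ?_⟩
    · intro p; fin_cases p <;> rfl
    · intro p q r
      fin_cases p <;> fin_cases q <;> fin_cases r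
      · show η 0 0 0 = (0) - (0) - (0) + (0)
        linear_combination (hD1 0 0)
      · show η 0 0 1 = (-η 0 1 0 - η 2 1 2) - (-η 0 1 0 - η 2 1 2) - (0) + (0)
        linear_combination (hD1 0 1)
      · show η 0 0 2 = (-η 2 1 2) - (-η 2 1 2) - (0) + (0)
        linear_combination (hD1 0 2)
      · show η 0 1 0 = (0) - (0) - (-η 0 1 0 - η 2 1 2) + (-η 2 1 2)
        linear_combination (0:ℤ) * hD1 0 0
      · show η 0 1 1 = (-η 0 1 0 - η 2 1 2) - (0) - (-η 0 1 0 - η 2 1 2) + (0)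
        linear_combination (hD2 0 1)
      · show η 0 1 2 = (-η 2 1 2) - (0) - (-η 0 1 0 - η 2 1 2) + (-η 0 1 0 + η 0 1 2)
        linear_combination (0:ℤ) * hD1 0 0
      · have hx : (3:ℤ) * η 0 2 0 = 3 * ((0) - (-η 0 1 0 + η 0 1 2) - (-η 2 1 2) + (-η 0 1 0 - η 2 1 2)) := by linear_combination (3) * (hD1 0 0) + (-2) * (hD1 0 1) + (hD1 0 2) + (hD1 1 2) + (hD2 1 2) + (hD2 2 0) + (hD1 2 1) + (-1) * hc0001 + (2) * hc0010 + (-1) * hc0012 + hc0101 + (2) * hc0112 + (2) * hc0120 + hc0121 + (-1) * hc1012 + hc2010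
        show η 0 2 0 = (0) - (-η 0 1 0 + η 0 1 2) - (-η 2 1 2) + (-η 0 1 0 - η 2 1 2)
        linarith
      · have hx : (3:ℤ) * η 0 2 1 = 3 * ((-η 0 1 0 - η 2 1 2) - (0) - (-η 2 1 2) + (0)) := by linear_combination (hD1 0 1) + (3) * (hD2 0 1) + (-2) * (hD1 0 2) + (hD1 1 2) + (hD2 1 2) + (hD2 2 0) + (hD1 2 1) + (-1) * hc0001 + (-1) * hc0010 + (-1) * hc0012 + hc0101 + (-1) * hc0112 + (-1) * hc0120 + hc0121 + (-1) * hc1012 + hc2010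
        show η 0 2 1 = (-η 0 1 0 - η 2 1 2) - (0) - (-η 2 1 2) + (0)
        linarith
      · show η 0 2 2 = (-η 2 1 2) - (-η 0 1 0 + η 0 1 2 + η 1 0 1) - (-η 2 1 2) + (-η 0 1 0 + η 0 1 2 + η 1 0 1)
        linear_combination (hD2 0 2)
      · show η 1 0 0 = (-η 0 1 0 + η 0 1 2) - (0) - (-η 0 1 0 + η 0 1 2) + (0)
        linear_combination (hD2 0 1) + (-1) * hc0112
      · show η 1 0 1 = (0) - (0) - (-η 0 1 0 + η 0 1 2) + (-η 0 1 0 + η 0 1 2 + η 1 0 1)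
        linear_combination (0:ℤ) * hD1 0 0
      · show η 1 0 2 = (-η 0 1 0 + η 0 1 2 + η 1 0 1) - (0) - (-η 0 1 0 + η 0 1 2) + (-η 0 1 0 - η 2 1 2)
        linear_combination (hD1 1 2) + (hD2 1 2) + (-1) * hc1012
      · show η 1 1 0 = (-η 0 1 0 + η 0 1 2) - (-η 0 1 0 + η 0 1 2) - (0) + (0)
        linear_combination (hD1 0 0) + (hD1 0 1) + (-1) * (hD1 0 2) + (-1) * hc0001 + (-1) * hc0012
      · show η 1 1 1 = (0) - (0) - (0) + (0)
        linear_combination (hD1 0 0) + (-1) * hc0002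
      · show η 1 1 2 = (-η 0 1 0 + η 0 1 2 + η 1 0 1) - (-η 0 1 0 + η 0 1 2 + η 1 0 1) - (0) + (0)
        linear_combination (hD1 1 2)
      · have hx : (3:ℤ) * η 1 2 0 = 3 * ((-η 0 1 0 + η 0 1 2) - (0) - (-η 0 1 0 + η 0 1 2 + η 1 0 1) + (0)) := by linear_combination (hD1 0 1) + (3) * (hD2 0 1) + (hD1 0 2) + (-2) * (hD1 1 2) + (hD2 1 2) + (hD2 2 0) + (hD1 2 1) + (-1) * hc0001 + (-1) * hc0010 + (-1) * hc0012 + hc0101 + (-3) * hc0102 + (-1) * hc0112 + (-1) * hc0120 + hc0121 + (-3) * hc0212 + (-1) * hc1012 + hc2010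
        show η 1 2 0 = (-η 0 1 0 + η 0 1 2) - (0) - (-η 0 1 0 + η 0 1 2 + η 1 0 1) + (0)
        linarith
      · have hx : (3:ℤ) * η 1 2 1 = 3 * ((0) - (-η 0 1 0 - η 2 1 2) - (-η 0 1 0 + η 0 1 2 + η 1 0 1) + (-η 0 1 0 + η 0 1 2)) := by linear_combination (3) * (hD1 0 0) + (-2) * (hD1 0 1) + (4) * (hD1 0 2) + (-3) * (hD2 0 2) + (-2) * (hD1 1 2) + (-2) * (hD2 1 2) + (hD2 2 0) + (hD1 2 1) + (-1) * hc0001 + (2) * hc0010 + (-1) * hc0012 + hc0101 + (2) * hc0112 + (2) * hc0120 + hc0121 + (-3) * hc0202 + (2) * hc1012 + hc2010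
        show η 1 2 1 = (0) - (-η 0 1 0 - η 2 1 2) - (-η 0 1 0 + η 0 1 2 + η 1 0 1) + (-η 0 1 0 + η 0 1 2)
        linarith
      · show η 1 2 2 = (-η 0 1 0 + η 0 1 2 + η 1 0 1) - (-η 2 1 2) - (-η 0 1 0 + η 0 1 2 + η 1 0 1) + (-η 2 1 2)
        linear_combination (hD2 1 2)
      · show η 2 0 0 = (0) - (-η 0 1 0 + η 0 1 2) - (0) + (-η 0 1 0 + η 0 1 2)
        linear_combination (hD2 2 0)
      · have hx : (3:ℤ) * η 2 0 1 = 3 * ((0) - (0) - (0) + (-η 2 1 2)) := by linear_combination (4) * (hD1 0 1) + (-2) * (hD1 0 2) + (hD1 1 2) + (hD2 1 2) + (hD2 2 0) + (hD1 2 1) + (-1) * hc0001 + (-1) * hc0010 + (-1) * hc0012 + (-2) * hc0101 + (-1) * hc0112 + (-1) * hc0120 + hc0121 + (-1) * hc1012 + hc2010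
        show η 2 0 1 = (0) - (0) - (0) + (-η 2 1 2)
        linarith
      · show η 2 0 2 = (0) - (-η 0 1 0 + η 0 1 2 + η 1 0 1) - (0) + (0)
        linear_combination (hD1 0 2) + (hD2 0 2) + (-1) * hc0102
      · have hx : (3:ℤ) * η 2 1 0 = 3 * ((0) - (0) - (0) + (-η 0 1 0 + η 0 1 2 + η 1 0 1)) := by linear_combination (hD1 0 1) + (-2) * (hD1 0 2) + (hD1 1 2) + (hD2 1 2) + (hD2 2 0) + (-2) * (hD1 2 1) + (-1) * hc0001 + (-1) * hc0010 + (-1) * hc0012 + hc0101 + (-1) * hc0112 + (-1) * hc0120 + (-2) * hc0121 + (-1) * hc1012 + hc2010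
        show η 2 1 0 = (0) - (0) - (0) + (-η 0 1 0 + η 0 1 2 + η 1 0 1)
        linarith
      · show η 2 1 1 = (0) - (-η 0 1 0 - η 2 1 2) - (0) + (-η 0 1 0 - η 2 1 2)
        linear_combination (hD2 0 1) + (-1) * hc0111
      · show η 2 1 2 = (0) - (-η 2 1 2) - (0) + (0)
        linear_combination (0:ℤ) * hD1 0 0
      · show η 2 2 0 = (0) - (0) - (0) + (0)
        linear_combination (hD1 0 0) + (-1) * (hD1 0 1) + (hD1 0 2) + hc0010
      · show η 2 2 1 = (0) - (0) - (0) + (0)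
        linear_combination (hD1 2 1)
      · show η 2 2 2 = (0) - (0) - (0) + (0)
        linear_combination (hD1 0 0) + (-1) * hc0001
end

section
/- Let G be a group, A a trivial G-module (abelian group), and α: G × G → A a group 2-cocycle, i.e., α(x,y) + α(xy,z) = α(x,yz) + α(y,z). Then φ(p,q) := α(p,q) − α(q, q⁻¹pq) is a rack 2-cocycle on the conjugation quandle G_conj: φ(p,r) + φ(p*r, q*r) = φ(p,q) + φ(p*q, r) for all p,q,r ∈ G, where p*q = q⁻¹pq. -/
/-- Let `G` be a group, `A` an abelian group with trivial `G`-action, and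
`α : G × G → A` a group 2-cocycle: `α(x,y) + α(xy,z) = α(x,yz) + α(y,z)`.
Then `φ(p,q) := α(p,q) − α(q, q⁻¹pq)` is a rack 2-cocycle on the conjugation
quandle `G_conj` (with `p * q = q⁻¹pq`):
`φ(p,r) + φ(p*r, q*r) = φ(p,q) + φ(p*q, r)` for all `p,q,r ∈ G`. -/
theorem group_cocycle_gives_quandle_cocycle {G A : Type*} [Group G]
    [AddCommGroup A] (α : G → G → A)
    (hα : ∀ x y z, α x y + α (x * y) z = α x (y * z) + α y z) :
    ∀ p q r : G,
      (fun p q : G => α p q - α q (q⁻¹ * p * q)) p r +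
        (fun p q : G => α p q - α q (q⁻¹ * p * q))
          (r⁻¹ * p * r) (r⁻¹ * q * r) =
      (fun p q : G => α p q - α q (q⁻¹ * p * q)) p q +
        (fun p q : G => α p q - α q (q⁻¹ * p * q)) (q⁻¹ * p * q) r := by
  intro p q r
  have h1 := hα p q r
  have h2 := hα p r (r⁻¹ * q * r)
  have h3 := hα q (q⁻¹ * p * q) r
  have h4 := hα q r (r⁻¹ * (q⁻¹ * p * q) * r)
  have h5 := hα r (r⁻¹ * p * r) (r⁻¹ * q * r)
  have h6 := hα r (r⁻¹ * q * r) ((r⁻¹ * q * r)⁻¹ * (r⁻¹ * p * r) * (r⁻¹ * q * r))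
  simp only [mul_assoc, mul_inv_rev, inv_inv, inv_mul_cancel_left, mul_inv_cancel_left] at *
  linear_combination (norm := abel1) -h1 + h2 + h3 - h4 - h5 + h6
end
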